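/- arXiv:1610.02712 — 4 statements merged into one kernel-verified Lean document; each statement's English description precedes it below -/
import Mathlib

section
/- Let g : ℝ/ℤ → ℝ be C¹. For every ε > 0 there exists δ > 0 such that for all x, y on the circle with ‖x − y‖ < δ and every integer n, |g^{(n)}(x) − g^{(n)}(y)| < ε · max{1, |n|·‖x − y‖}, where g^{(n)} denotes the Birkhoff cocycle of g over the rotation by a fixed irrational α. -/
/-!
The Birkhoff sum `g^{(n)}` is `1`-periodic with derivative `(g')^{(n)}`, so by the mean value
theorem `|g^{(n)}(x) - g^{(n)}(y)| ≤ sup |(g')^{(n)}| · ‖x - y‖`. Since `g'` is continuous with zero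
mean, the uniform ergodic theorem for the irrational rotation (Weyl: approximate `g'` uniformly by
trigonometric polynomials, whose non-constant modes have bounded Birkhoff sums by the geometric
series) gives `sup |(g')^{(n)}| ≤ ε n / 2` for `n ≥ N`; for `n < N` the crude bound `N · sup |g'|`
is absorbed by taking `δ` small.
-/

noncomputable def cdist (x : ℝ) : ℝ := ‖(x : AddCircle (1:ℝ))‖

/-- The Birkhoff cocycle of `g` over the rotation by `α` on the circle
(represented by `1`-periodic functions on `ℝ`). -/
noncomputable def birkZ (α : ℝ) (g : ℝ → ℝ) (n : ℤ) (x : ℝ) : ℝ :=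
  if 0 ≤ n then ∑ i ∈ Finset.range n.toNat, g (x + (i : ℝ) * α)
  else -∑ i ∈ Finset.range (-n).toNat, g (x + ((n : ℝ) + (i : ℝ)) * α)

open Finset Function MeasureTheory AddCircle

theorem birkhoffSum_add_right_apply {G M : Type*} [AddMonoid G] [AddCommMonoid M] (α : G)
    (g : G → M) (n : ℕ) (x : G) :
    birkhoffSum (· + α) g n x = ∑ k ∈ range n, g (x + k • α) := by
  simp [birkhoffSum, add_right_iterate]

theorem Function.Periodic.birkhoffSum_add_right {G M : Type*} [AddCommMonoid G]
    [AddCommMonoid M] {g : G → M} {c : G} (hg : Periodic g c) (α : G) (n : ℕ) :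
    Periodic (birkhoffSum (· + α) g n) c := fun x => by
  simp only [birkhoffSum_add_right_apply, add_right_comm x c, hg _]

theorem Function.Semiconj.birkhoffSum_comp {α β M : Type*} [AddCommMonoid M] {φ : α → β}
    {f : α → α} {f' : β → β} (h : Semiconj φ f f') (g : β → M) (n : ℕ) (x : α) :
    birkhoffSum f' g n (φ x) = birkhoffSum f (g ∘ φ) n x := by
  simp only [birkhoffSum, comp_apply, (h.iterate_right _).eq]

theorem hasDerivAt_birkhoffSum_add_right {𝕜 F : Type*} [NontriviallyNormedField 𝕜]
    [NormedAddCommGroup F] [NormedSpace 𝕜 F] (α : 𝕜) {g g' : 𝕜 → F}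
    (hg : ∀ x, HasDerivAt g (g' x) x) (n : ℕ) (x : 𝕜) :
    HasDerivAt (birkhoffSum (· + α) g n) (birkhoffSum (· + α) g' n x) x := by
  rw [funext (birkhoffSum_add_right_apply α g n), birkhoffSum_add_right_apply]
  exact HasDerivAt.fun_sum fun k _ => (hg _).comp_add_const x (k • α)

theorem norm_birkhoffSum_le {α E : Type*} [SeminormedAddCommGroup E] (f : α → α) {g : α → E}
    {C : ℝ} (hg : ∀ x, ‖g x‖ ≤ C) (n : ℕ) (x : α) : ‖birkhoffSum f g n x‖ ≤ n * C := by
  simpa [birkhoffSum] using norm_sum_le_of_le (range n) fun k _ => hg (f^[k] x)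

theorem Function.Periodic.norm_sub_le_mul_cdist {E : Type*} [NormedAddCommGroup E]
    [NormedSpace ℝ E] {f f' : ℝ → E} (hf : Periodic f 1) (hderiv : ∀ t, HasDerivAt f (f' t) t)
    {C : ℝ} (hC : ∀ t, ‖f' t‖ ≤ C) (x y : ℝ) : ‖f x - f y‖ ≤ C * cdist (x - y) := by
  have hshift : f y = f (y + round (x - y)) := by simpa using (hf.int_mul (round (x - y)) y).symm
  rw [cdist, UnitAddCircle.norm_eq, hshift]
  convert Convex.norm_image_sub_le_of_norm_hasDerivWithin_le
    (fun t _ => (hderiv t).hasDerivWithinAt) (fun t _ => hC t) convex_univ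
    (Set.mem_univ (y + round (x - y))) (Set.mem_univ x) using 3
  rw [Real.norm_eq_abs]
  ring_nf

theorem Function.Periodic.deriv {𝕜 F : Type*} [NontriviallyNormedField 𝕜]
    [NormedAddCommGroup F] [NormedSpace 𝕜 F] {f : 𝕜 → F} {c : 𝕜} (hf : Periodic f c) :
    Periodic (deriv f) c := fun x => by
  rw [← deriv_comp_add_const, hf.funext]

theorem intervalIntegral_deriv_eq_zero_of_periodic {E : Type*} [NormedAddCommGroup E]
    [NormedSpace ℝ E] [CompleteSpace E] {f : ℝ → E} {c : ℝ} (hf : Periodic f c)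
    (hd : Differentiable ℝ f) (hint : IntervalIntegrable (deriv f) volume 0 c) :
    ∫ t in (0 : ℝ)..c, deriv f t = 0 := by
  rw [intervalIntegral.integral_deriv_eq_sub (fun t _ => hd t) hint, hf.eq, sub_self]

theorem ContinuousMap.integrable_of_compactSpace {X E : Type*} [TopologicalSpace X]
    [CompactSpace X] [MeasurableSpace X] [OpensMeasurableSpace X] [NormedAddCommGroup E]
    (μ : Measure X) [IsFiniteMeasure μ] (u : C(X, E)) : Integrable u μ :=
  u.continuous.integrable_of_hasCompactSupport (HasCompactSupport.of_compactSpace _)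

section Weyl

variable {T : ℝ}

theorem fourier_add_apply (k : ℤ) (z w : AddCircle T) :
    fourier k (z + w) = fourier k z * fourier k w := by
  simp [fourier_apply, smul_add, toCircle_add]

theorem norm_birkhoffSum_fourier_le {k : ℤ} {β : AddCircle T} (hβ : fourier k β ≠ 1) (n : ℕ)
    (z : AddCircle T) : ‖birkhoffSum (· + β) (fourier k) n z‖ ≤ 2 / ‖fourier k β - 1‖ := by
  have hpow : ∀ i : ℕ, fourier k (i • β) = fourier k β ^ i := fun i => by
    simp [fourier_apply, smul_comm k i, toCircle_nsmul]
  rw [birkhoffSum_add_right_apply]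
  simp only [fourier_add_apply, hpow, ← mul_sum, geom_sum_eq hβ, norm_mul, norm_div]
  rw [fourier_apply, Circle.norm_coe, one_mul]
  gcongr
  calc ‖fourier k β ^ n - 1‖ ≤ ‖fourier k β ^ n‖ + ‖(1 : ℂ)‖ := norm_sub_le _ _
    _ = 2 := by rw [norm_pow, fourier_apply, Circle.norm_coe]; norm_num

variable [Fact (0 < T)]

theorem norm_fourierCoeff_le {E : Type*} [NormedAddCommGroup E] [NormedSpace ℂ E]
    [CompleteSpace E] (u : C(AddCircle T, E)) (k : ℤ) : ‖fourierCoeff u k‖ ≤ ‖u‖ := by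
  have hbound : ∀ t, ‖fourier (-k) t • u t‖ ≤ ‖u‖ := fun t => by
    rw [norm_smul, fourier_apply, Circle.norm_coe, one_mul]
    exact u.norm_coe_le_norm t
  simpa [fourierCoeff] using
    norm_integral_le_of_norm_le_const (μ := haarAddCircle) (Filter.Eventually.of_forall hbound)

theorem fourierCoeff_sub {E : Type*} [NormedAddCommGroup E] [NormedSpace ℂ E]
    [CompleteSpace E] (u v : C(AddCircle T, E)) (k : ℤ) :
    fourierCoeff ⇑(u - v) k = fourierCoeff u k - fourierCoeff v k := by
  simpa [fourierCoeff, smul_sub] using integral_sub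
    ((u.integrable_of_compactSpace haarAddCircle).fourier_smul (-k))
    ((v.integrable_of_compactSpace haarAddCircle).fourier_smul (-k))

theorem fourier_coe_ne_one_of_irrational {α : ℝ} (hα : Irrational α) {k : ℤ} (hk : k ≠ 0) :
    fourier k (α : AddCircle (1 : ℝ)) ≠ 1 := by
  intro h
  rw [fourier_apply, Circle.coe_eq_one, ← toCircle_zero (T := 1),
    (injective_toCircle one_ne_zero).eq_iff, ← AddCircle.coe_zsmul, coe_eq_zero_iff] at h
  obtain ⟨m, hm⟩ := h
  exact (hα.intCast_mul hk).ne_int m (by simpa using hm.symm)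

-- `fourierCoeff u 0` is the mean of `u` with respect to the normalised Haar measure.
noncomputable def boundedDiscrepancy (β : AddCircle T) : Submodule ℂ C(AddCircle T, ℂ) where
  carrier := {u | ∃ C, ∀ (n : ℕ) z, ‖birkhoffSum (· + β) u n z - n • fourierCoeff u 0‖ ≤ C}
  zero_mem' := ⟨0, fun n z => by simp [birkhoffSum, fourierCoeff]⟩
  add_mem' := by
    rintro u v ⟨C, hC⟩ ⟨D, hD⟩
    refine ⟨C + D, fun n z => (le_of_eq ?_).trans
      ((norm_add_le _ _).trans (add_le_add (hC n z) (hD n z)))⟩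
    rw [ContinuousMap.coe_add, birkhoffSum_add',
      fourierCoeff.add (u.integrable_of_compactSpace _) (v.integrable_of_compactSpace _),
      Pi.add_apply, smul_add]
    congr 1
    abel
  smul_mem' := by
    rintro c u ⟨C, hC⟩
    refine ⟨‖c‖ * C, fun n z => ?_⟩
    have hsmul : birkhoffSum (· + β) (c • ⇑u) n z = c • birkhoffSum (· + β) u n z := by
      simp [birkhoffSum, mul_sum]
    rw [ContinuousMap.coe_smul, fourierCoeff.const_smul, hsmul, smul_comm n c, ← smul_sub,
      norm_smul]
    exact mul_le_mul_of_nonneg_left (hC n z) (norm_nonneg c)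

theorem fourier_mem_boundedDiscrepancy {β : AddCircle T} (hβ : ∀ k ≠ 0, fourier k β ≠ 1)
    (k : ℤ) : fourier k ∈ boundedDiscrepancy β := by
  rcases eq_or_ne k 0 with rfl | hk
  · exact ⟨0, fun n z => by simp [birkhoffSum, fourierCoeff_fourier]⟩
  · refine ⟨2 / ‖fourier k β - 1‖, fun n z => ?_⟩
    simpa [fourierCoeff_fourier, hk] using norm_birkhoffSum_fourier_le (hβ k hk) n z

theorem exists_norm_birkhoffSum_sub_le {β : AddCircle T} (hβ : ∀ k ≠ 0, fourier k β ≠ 1)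
    (u : C(AddCircle T, ℂ)) {ε : ℝ} (hε : 0 < ε) :
    ∃ N : ℕ, ∀ n ≥ N, ∀ z, ‖birkhoffSum (· + β) u n z - n • fourierCoeff u 0‖ ≤ ε * n := by
  obtain ⟨P, hP, huP⟩ : ∃ P ∈ Submodule.span ℂ (Set.range fourier), dist u P < ε / 4 := by
    have hu : u ∈ closure (Submodule.span ℂ (Set.range (fourier (T := T))) :
        Set C(AddCircle T, ℂ)) := by
      rw [← Submodule.topologicalClosure_coe, span_fourier_closure_eq_top]
      trivial
    exact Metric.mem_closure_iff.mp hu _ (by positivity)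
  obtain ⟨C, hC⟩ : P ∈ boundedDiscrepancy β := Submodule.span_le.mpr
    (Set.range_subset_iff.mpr (fourier_mem_boundedDiscrepancy hβ)) hP
  obtain ⟨N, hN⟩ := exists_nat_ge (C / (ε / 2))
  refine ⟨N, fun n hn z => ?_⟩
  have hCn : C ≤ ε / 2 * n := by
    rw [div_le_iff₀ (by positivity)] at hN
    nlinarith [(Nat.cast_le (α := ℝ)).mpr hn]
  have hsum : ‖birkhoffSum (· + β) ⇑(u - P) n z‖ ≤ n * (ε / 4) := norm_birkhoffSum_le _
    (fun w => ((u - P).norm_coe_le_norm w).trans (dist_eq_norm u P ▸ huP.le)) n z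
  have hmean : ‖n • fourierCoeff ⇑(u - P) 0‖ ≤ n * (ε / 4) := by
    rw [nsmul_eq_mul, norm_mul, Complex.norm_natCast]
    exact mul_le_mul_of_nonneg_left ((norm_fourierCoeff_le _ 0).trans (dist_eq_norm u P ▸ huP.le))
      n.cast_nonneg
  calc ‖birkhoffSum (· + β) u n z - n • fourierCoeff u 0‖
      = ‖birkhoffSum (· + β) ⇑(u - P) n z + (birkhoffSum (· + β) P n z - n • fourierCoeff P 0)
          - n • fourierCoeff ⇑(u - P) 0‖ := by
        rw [ContinuousMap.coe_sub, birkhoffSum_sub, ← ContinuousMap.coe_sub, fourierCoeff_sub,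
          smul_sub]
        congr 1
        abel
    _ ≤ n * (ε / 4) + C + n * (ε / 4) := (norm_sub_le _ _).trans
        (add_le_add ((norm_add_le _ _).trans (add_le_add hsum (hC n z))) hmean)
    _ ≤ ε * n := by linarith

end Weyl

theorem exists_abs_birkhoffSum_le_of_integral_eq_zero {α : ℝ} (hα : Irrational α) {h : ℝ → ℝ}
    (hc : Continuous h) (hp : Periodic h 1) (hmean : ∫ t in (0 : ℝ)..1, h t = 0) {ε : ℝ}
    (hε : 0 < ε) : ∃ N : ℕ, ∀ n ≥ N, ∀ x, |birkhoffSum (· + α) h n x| ≤ ε * n := by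
  have hpC : Periodic (fun t => (h t : ℂ)) 1 := hp.comp ((↑) : ℝ → ℂ)
  let u : C(AddCircle (1 : ℝ), ℂ) :=
    ⟨hpC.lift, (Complex.continuous_ofReal.comp hc).quotient_liftOn' _⟩
  have hu_coe : ∀ t : ℝ, u t = h t := fun _ => rfl
  have hu : fourierCoeff u 0 = 0 := by
    simp [fourierCoeff_eq_intervalIntegral _ _ 0, hu_coe, intervalIntegral.integral_ofReal, hmean]
  obtain ⟨N, hN⟩ := exists_norm_birkhoffSum_sub_le
    (fun k hk => fourier_coe_ne_one_of_irrational hα hk) u hε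
  refine ⟨N, fun n hn x => ?_⟩
  have hsemiconj :
      Semiconj ((↑) : ℝ → AddCircle (1 : ℝ)) (· + α) (· + (α : AddCircle (1 : ℝ))) :=
    fun _ => rfl
  have hlift : birkhoffSum (· + (α : AddCircle (1 : ℝ))) u n x = birkhoffSum (· + α) h n x := by
    rw [hsemiconj.birkhoffSum_comp]
    exact (map_birkhoffSum Complex.ofRealHom _ h n x).symm
  simpa [hu, hlift] using hN n hn x

theorem exists_abs_birkhoffSum_sub_lt {α : ℝ} (hα : Irrational α) {g : ℝ → ℝ}
    (hg : ContDiff ℝ 1 g) (hper : Periodic g 1) {ε : ℝ} (hε : 0 < ε) :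
    ∃ δ > 0, ∀ x y : ℝ, cdist (x - y) < δ → ∀ n : ℕ,
      |birkhoffSum (· + α) g n x - birkhoffSum (· + α) g n y| < ε * max 1 (n * cdist (x - y)) := by
  have hd : Differentiable ℝ g := hg.differentiable one_ne_zero
  have hcont : Continuous (deriv g) := hg.continuous_deriv le_rfl
  obtain ⟨M, hM⟩ : ∃ M, ∀ t, ‖deriv g t‖ ≤ M := by
    obtain ⟨M, hM⟩ := isBounded_iff_forall_norm_le.mp
      (hper.deriv.isBounded_of_continuous one_ne_zero hcont)
    exact ⟨M, fun t => hM _ (Set.mem_range_self t)⟩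
  obtain ⟨N, hN⟩ := exists_abs_birkhoffSum_le_of_integral_eq_zero hα hcont hper.deriv
    (intervalIntegral_deriv_eq_zero_of_periodic hper hd (hcont.intervalIntegrable 0 1))
    (half_pos hε)
  have hlip : ∀ n b, (∀ t, ‖birkhoffSum (· + α) (deriv g) n t‖ ≤ b) → ∀ x y,
      |birkhoffSum (· + α) g n x - birkhoffSum (· + α) g n y| ≤ b * cdist (x - y) :=
    fun n _ hb => (hper.birkhoffSum_add_right α n).norm_sub_le_mul_cdist
      (hasDerivAt_birkhoffSum_add_right α (fun t => (hd t).hasDerivAt) n) hb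
  have hM0 : 0 ≤ M := (norm_nonneg _).trans (hM 0)
  refine ⟨ε / (M * N + 1), by positivity, fun x y hxy n => ?_⟩
  set c := cdist (x - y)
  have hc : 0 ≤ c := norm_nonneg _
  rcases le_or_gt N n with hn | hn
  · have hmax : 0 < max 1 (n * c) := one_pos.trans_le (le_max_left _ _)
    calc _ ≤ ε / 2 * n * c := hlip n _ (hN n hn) x y
      _ ≤ ε / 2 * max 1 (n * c) := by rw [mul_assoc]; gcongr; exact le_max_right _ _
      _ < ε * max 1 (n * c) := by gcongr; linarith
  · have hb : ∀ t, ‖birkhoffSum (· + α) (deriv g) n t‖ ≤ M * N := fun t =>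
      (norm_birkhoffSum_le _ hM n t).trans (by rw [mul_comm]; gcongr)
    calc _ ≤ M * N * c := hlip n _ hb x y
      _ < ε := by
        rw [lt_div_iff₀ (by positivity)] at hxy
        nlinarith
      _ ≤ ε * max 1 (n * c) := le_mul_of_one_le_right hε.le (le_max_left _ _)

theorem birkZ_of_nonneg (α : ℝ) (g : ℝ → ℝ) {n : ℤ} (hn : 0 ≤ n) (x : ℝ) :
    birkZ α g n x = birkhoffSum (· + α) g n.natAbs x := by
  have : n.toNat = n.natAbs := by omega
  simp [birkZ, hn, birkhoffSum_add_right_apply, this]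

theorem birkZ_of_neg (α : ℝ) (g : ℝ → ℝ) {n : ℤ} (hn : n < 0) (x : ℝ) :
    birkZ α g n x = -birkhoffSum (· + α) g n.natAbs (x + n * α) := by
  have : (-n).toNat = n.natAbs := by omega
  simp [birkZ, hn.not_ge, birkhoffSum_add_right_apply, this, add_mul, add_assoc]

/-- For a `C¹` function `g` on the circle, for every `ε > 0` there is `δ > 0` such that for
all `x, y` with `‖x − y‖ < δ` and every `n ∈ ℤ`,
`|g^{(n)}(x) − g^{(n)}(y)| < ε · max{1, |n|·‖x−y‖}`. -/
theorem stmt2 (α : ℝ) (hα : Irrational α) (g : ℝ → ℝ)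
    (hg : ContDiff ℝ 1 g) (hper : Function.Periodic g 1) :
    ∀ ε > 0, ∃ δ > 0, ∀ x y : ℝ, cdist (x - y) < δ → ∀ n : ℤ,
      |birkZ α g n x - birkZ α g n y| < ε * max 1 (|(n : ℝ)| * cdist (x - y)) := by
  intro ε hε
  obtain ⟨δ, hδ, hS⟩ := exists_abs_birkhoffSum_sub_lt hα hg hper hε
  refine ⟨δ, hδ, fun x y hxy n => ?_⟩
  rw [← Int.cast_abs, ← Nat.cast_natAbs]
  rcases le_or_gt 0 n with hn | hn
  · rw [birkZ_of_nonneg α g hn, birkZ_of_nonneg α g hn]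
    exact hS x y hxy n.natAbs
  · have hshift : (x + n * α) - (y + n * α) = x - y := by ring
    rw [birkZ_of_neg α g hn, birkZ_of_neg α g hn, neg_sub_neg, abs_sub_comm, ← hshift]
    exact hS _ _ (hshift ▸ hxy) n.natAbs
end

section
/- Let (X, μ) be a probability space and (B_n) a sequence of measurable sets such that |μ(B_n ∩ B_m) − μ(B_n)μ(B_m)| ≤ ε(|n − m|) for all n ≠ m, where Σ_k ε(k)/k < ∞. Then (1/n) Σ_{i=1}^n (1_{B_i} − μ(B_i)) → 0 μ-almost everywhere. -/
/-!
Write `S n = ∑_{i ≤ n} (1_{B_i} - μ(B_i))`. The correlation bound gives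
`E[S_n²] ≤ n (1 + 2 ∑_{k ≤ n} ε(k))`, and exchanging the order of summation, using
`∑_{n > k} n⁻² ≤ 2 / (k + 1)`, shows `∑ₙ E[S_n²] / n³ < ∞`; hence `∑ₙ S_n² / n³ < ∞`
almost surely.
Since `S` moves by at most one per step, `|S_n| ≥ δ n` forces `|S_m| ≥ δ n / 2` for all
`m ∈ [n, n + δ n / 2]`, so the tail of that series from `n` on is at least `δ³ / 64`.
Therefore `S_n / n → 0`.
-/

open MeasureTheory Filter Finset Topology

section UnitSteps

variable {S : ℕ → ℝ}

lemma abs_sub_le_of_abs_sub_succ_le_one (hS : ∀ n, |S (n + 1) - S n| ≤ 1) {m n : ℕ}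
    (hmn : m ≤ n) : |S n - S m| ≤ n - m := by
  have h := dist_le_Ico_sum_of_dist_le (f := S) (d := fun _ => 1) hmn fun _ _ => by
    rw [Real.dist_eq, abs_sub_comm]; exact hS _
  rw [Real.dist_eq, abs_sub_comm] at h
  simpa [Nat.cast_sub hmn] using h

lemma le_sum_sq_div_cube_of_le_abs (hS : ∀ n, |S (n + 1) - S n| ≤ 1) {δ : ℝ} (hδ0 : 0 < δ)
    (hδ1 : δ ≤ 1) {n : ℕ} (hn : 0 < n) (hSn : δ * n ≤ |S n|) :
    δ ^ 3 / 64 ≤ ∑ j ∈ range (⌊δ * n / 2⌋₊ + 1), S (j + n) ^ 2 / ((j + n : ℕ) : ℝ) ^ 3 := by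
  set L := ⌊δ * n / 2⌋₊ + 1
  have hnpos : (0 : ℝ) < n := by exact_mod_cast hn
  have hL : δ * n / 2 ≤ L := by
    simpa [L] using (Nat.lt_floor_add_one (δ * n / 2)).le
  have hterm : ∀ j ∈ range L, δ ^ 2 / (32 * n) ≤ S (j + n) ^ 2 / ((j + n : ℕ) : ℝ) ^ 3 := by
    intro j hj
    have hjL : (j : ℝ) ≤ δ * n / 2 :=
      (Nat.le_floor_iff (by positivity)).1 (Nat.lt_succ_iff.1 (mem_range.1 hj))
    have hstep := abs_sub_le_of_abs_sub_succ_le_one hS (Nat.le_add_left n j)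
    push_cast at hstep ⊢
    have hlow : δ * n / 2 ≤ |S (j + n)| := by
      linarith [abs_sub_abs_le_abs_sub (S n) (S (j + n)), abs_sub_comm (S n) (S (j + n))]
    have hsq : (δ * n / 2) ^ 2 ≤ S (j + n) ^ 2 := by
      rw [← sq_abs (S _)]; exact pow_le_pow_left₀ (by positivity) hlow 2
    have hcube : ((j : ℝ) + n) ^ 3 ≤ (2 * n) ^ 3 :=
      pow_le_pow_left₀ (by positivity) (by nlinarith) 3
    calc δ ^ 2 / (32 * n) = (δ * n / 2) ^ 2 / (2 * n) ^ 3 := by field_simp; ring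
      _ ≤ S (j + n) ^ 2 / ((j : ℝ) + n) ^ 3 := by gcongr
  calc δ ^ 3 / 64 = δ * n / 2 * (δ ^ 2 / (32 * n)) := by field_simp; ring
    _ ≤ L * (δ ^ 2 / (32 * n)) := by gcongr
    _ ≤ _ := by simpa using card_nsmul_le_sum _ _ _ hterm

lemma eventually_abs_lt_mul_of_summable (hS : ∀ n, |S (n + 1) - S n| ≤ 1)
    (hsum : Summable fun n : ℕ => S n ^ 2 / (n : ℝ) ^ 3) {δ : ℝ} (hδ0 : 0 < δ) (hδ1 : δ ≤ 1) :
    ∀ᶠ n : ℕ in atTop, |S n| < δ * n := by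
  have htail := (tendsto_sum_nat_add fun n => S n ^ 2 / (n : ℝ) ^ 3).eventually
    (gt_mem_nhds (show (0 : ℝ) < δ ^ 3 / 64 by positivity))
  filter_upwards [htail, eventually_gt_atTop 0] with n hn hnpos
  by_contra! hSn
  have hblock := le_sum_sq_div_cube_of_le_abs hS hδ0 hδ1 hnpos hSn
  have hle := ((summable_nat_add_iff n).2 hsum).sum_le_tsum (range (⌊δ * n / 2⌋₊ + 1))
    fun j _ => by positivity
  linarith

theorem tendsto_div_of_abs_sub_le_one_of_summable (hS : ∀ n, |S (n + 1) - S n| ≤ 1)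
    (hsum : Summable fun n : ℕ => S n ^ 2 / (n : ℝ) ^ 3) :
    Tendsto (fun n : ℕ => S n / n) atTop (𝓝 0) := by
  rw [Metric.tendsto_nhds]
  intro δ hδ
  filter_upwards [eventually_abs_lt_mul_of_summable hS hsum (lt_min hδ one_pos)
    (min_le_right δ 1), eventually_gt_atTop 0] with n hn hnpos
  have hnpos : (0 : ℝ) < n := by exact_mod_cast hnpos
  rw [Real.dist_eq, sub_zero, abs_div, Nat.abs_cast, div_lt_iff₀ hnpos]
  exact hn.trans_le (by gcongr; exact min_le_left δ 1)

end UnitSteps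

lemma summable_sum_range_div_sq {b : ℕ → ℝ} (hb : ∀ k, 0 ≤ b k)
    (hsum : Summable fun k : ℕ => b k / (k + 1 : ℝ)) :
    Summable fun n : ℕ => (∑ k ∈ range n, b k) / (n : ℝ) ^ 2 := by
  refine summable_of_sum_range_le (c := 2 * ∑' k, b k / (k + 1 : ℝ))
    (fun n => div_nonneg (sum_nonneg fun k _ => hb k) (sq_nonneg _)) fun N => ?_
  calc ∑ n ∈ range N, (∑ k ∈ range n, b k) / (n : ℝ) ^ 2
      = ∑ k ∈ range N, b k * ∑ n ∈ Ioo k N, ((n : ℝ) ^ 2)⁻¹ := by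
        simp_rw [sum_div, mul_sum, div_eq_mul_inv]
        exact sum_comm' fun n k => by simp only [mem_range, mem_Ioo]; omega
    _ ≤ ∑ k ∈ range N, b k * (2 / (k + 1)) :=
        sum_le_sum fun k _ => mul_le_mul_of_nonneg_left (sum_Ioo_inv_sq_le k N) (hb k)
    _ = 2 * ∑ k ∈ range N, b k / (k + 1 : ℝ) := by
        rw [mul_sum]; exact sum_congr rfl fun k _ => by ring
    _ ≤ 2 * ∑' k, b k / (k + 1 : ℝ) := by
        gcongr; exact hsum.sum_le_tsum _ fun k _ => div_nonneg (hb k) (by positivity)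

lemma sum_comp_le_sum_of_injOn {ι κ M : Type*} [DecidableEq κ] [AddCommMonoid M]
    [PartialOrder M] [IsOrderedAddMonoid M] {s : Finset ι} {t : Finset κ} {g : ι → κ}
    {f : κ → M} (hf : ∀ k ∈ t, 0 ≤ f k) (hg : ∀ i ∈ s, g i ∈ t)
    (hinj : Set.InjOn g s) : ∑ i ∈ s, f (g i) ≤ ∑ k ∈ t, f k := by
  rw [← sum_image hinj]
  exact sum_le_sum_of_subset_of_nonneg (image_subset_iff.2 hg) fun k hk _ => hf k hk

lemma sum_erase_natAbs_sub_le {ε : ℕ → ℝ} (hε : ∀ k, 0 ≤ ε k) {n i : ℕ} (hi : i ∈ Icc 1 n) :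
    ∑ j ∈ (Icc 1 n).erase i, ε ((i : ℤ) - j).natAbs ≤ 2 * ∑ k ∈ range n, ε (k + 1) := by
  have hsplit : (Icc 1 n).erase i = Ico 1 i ∪ Ioc i n := by
    ext j; simp only [mem_erase, mem_Icc, mem_union, mem_Ico, mem_Ioc] at hi ⊢; omega
  have hdisj : Disjoint (Ico 1 i) (Ioc i n) :=
    disjoint_left.2 fun j hj hj' => by simp only [mem_Ico, mem_Ioc] at hj hj'; omega
  have hε' : ∀ k ∈ range n, 0 ≤ ε (k + 1) := fun k _ => hε _
  have hbelow : ∑ j ∈ Ico 1 i, ε ((i : ℤ) - j).natAbs ≤ ∑ k ∈ range n, ε (k + 1) :=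
    calc ∑ j ∈ Ico 1 i, ε ((i : ℤ) - j).natAbs = ∑ j ∈ Ico 1 i, ε ((i - j - 1) + 1) :=
          sum_congr rfl fun j hj => by simp only [mem_Ico] at hj; congr 1; omega
      _ ≤ ∑ k ∈ range n, ε (k + 1) := sum_comp_le_sum_of_injOn hε'
          (fun j hj => by simp only [mem_Ico, mem_range, mem_Icc] at hj hi ⊢; omega)
          (fun j hj j' hj' h => by simp only [coe_Ico, Set.mem_Ico] at hj hj' h; omega)
  have habove : ∑ j ∈ Ioc i n, ε ((i : ℤ) - j).natAbs ≤ ∑ k ∈ range n, ε (k + 1) :=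
    calc ∑ j ∈ Ioc i n, ε ((i : ℤ) - j).natAbs = ∑ j ∈ Ioc i n, ε ((j - i - 1) + 1) :=
          sum_congr rfl fun j hj => by simp only [mem_Ioc] at hj; congr 1; omega
      _ ≤ ∑ k ∈ range n, ε (k + 1) := sum_comp_le_sum_of_injOn hε'
          (fun j hj => by simp only [mem_Ioc, mem_range] at hj ⊢; omega)
          (fun j hj j' hj' h => by simp only [coe_Ioc, Set.mem_Ioc] at hj hj' h; omega)
  rw [hsplit, sum_union hdisj]
  linarith

lemma ae_summable_norm_of_summable_integral_norm {Ω E : Type*} [MeasurableSpace Ω]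
    {μ : Measure Ω} [NormedAddCommGroup E] {f : ℕ → Ω → E} (hf : ∀ n, Integrable (f n) μ)
    (hsum : Summable fun n => ∫ ω, ‖f n ω‖ ∂μ) :
    ∀ᵐ ω ∂μ, Summable fun n => ‖f n ω‖ := by
  refine summable_norm_of_tsum_eLpNorm_ne_top le_rfl (fun n => (hf n).1) ?_
  simp_rw [eLpNorm_one_eq_lintegral_enorm, ← ofReal_integral_norm_eq_lintegral_enorm (hf _),
    ← ENNReal.ofReal_tsum_of_nonneg (fun n => integral_nonneg fun ω => norm_nonneg _) hsum]
  exact ENNReal.ofReal_ne_top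

section WeaklyCorrelated

open ProbabilityTheory

variable {Ω : Type*} [MeasurableSpace Ω] {μ : Measure Ω} [IsProbabilityMeasure μ]
  {X : ℕ → Ω → ℝ} {ε : ℕ → ℝ}

lemma integral_sq_sum_sub_integral_le (hX : ∀ i, AEMeasurable (X i) μ)
    (hX01 : ∀ i ω, X i ω ∈ Set.Icc 0 1) (hε : ∀ k, 0 ≤ ε k)
    (hcov : ∀ m n : ℕ, m ≠ n → |cov[X n, X m; μ]| ≤ ε ((n : ℤ) - m).natAbs) (n : ℕ) :
    ∫ ω, (∑ i ∈ Icc 1 n, (X i ω - μ[X i])) ^ 2 ∂μ ≤ n * (1 + 2 * ∑ k ∈ range n, ε (k + 1)) := by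
  have hL2 : ∀ i, MemLp (X i) 2 μ := fun i =>
    memLp_of_bounded (ae_of_all _ (hX01 i)) (hX i).aestronglyMeasurable 2
  have hvar : Var[∑ i ∈ Icc 1 n, X i; μ] = ∫ ω, (∑ i ∈ Icc 1 n, (X i ω - μ[X i])) ^ 2 ∂μ := by
    rw [variance_eq_integral (Finset.aemeasurable_sum _ fun i _ => hX i)]
    simp_rw [Finset.sum_apply]
    rw [integral_finsetSum _ fun i _ => (hL2 i).integrable one_le_two]
    simp_rw [sum_sub_distrib]
  rw [← hvar, variance_sum' fun i _ => hL2 i]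
  calc ∑ i ∈ Icc 1 n, ∑ j ∈ Icc 1 n, cov[X i, X j; μ]
      ≤ ∑ i ∈ Icc 1 n, (1 + 2 * ∑ k ∈ range n, ε (k + 1)) := by
        refine sum_le_sum fun i hi => ?_
        rw [← add_sum_erase _ _ hi]
        have hdiag : cov[X i, X i; μ] ≤ 1 := by
          rw [covariance_self (hX i)]
          have := variance_le_sq_of_bounded (ae_of_all _ (hX01 i)) (hX i)
          norm_num at this; linarith
        have hoff : ∑ j ∈ (Icc 1 n).erase i, cov[X i, X j; μ]
            ≤ ∑ j ∈ (Icc 1 n).erase i, ε ((i : ℤ) - j).natAbs :=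
          sum_le_sum fun j hj => (le_abs_self _).trans (hcov j i (mem_erase.1 hj).1)
        linarith [sum_erase_natAbs_sub_le hε hi]
    _ = n * (1 + 2 * ∑ k ∈ range n, ε (k + 1)) := by simp [mul_add]

lemma ae_summable_sq_sum_sub_integral_div_cube (hX : ∀ i, AEMeasurable (X i) μ)
    (hX01 : ∀ i ω, X i ω ∈ Set.Icc 0 1) (hε : ∀ k, 0 ≤ ε k)
    (hsum : Summable fun k : ℕ => ε (k + 1) / (k + 1 : ℝ))
    (hcov : ∀ m n : ℕ, m ≠ n → |cov[X n, X m; μ]| ≤ ε ((n : ℤ) - m).natAbs) :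
    ∀ᵐ ω ∂μ, Summable fun n : ℕ => (∑ i ∈ Icc 1 n, (X i ω - μ[X i])) ^ 2 / (n : ℝ) ^ 3 := by
  set f : ℕ → Ω → ℝ := fun n ω => (∑ i ∈ Icc 1 n, (X i ω - μ[X i])) ^ 2 / (n : ℝ) ^ 3
  have hf0 : ∀ n ω, 0 ≤ f n ω := fun n ω => by positivity
  have hf : ∀ n, Integrable (f n) μ := by
    intro n
    have hS : MemLp (fun ω => ∑ i ∈ Icc 1 n, (X i ω - μ[X i])) 2 μ :=
      memLp_finsetSum _ fun i _ => (memLp_of_bounded (ae_of_all _ (hX01 i))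
        (hX i).aestronglyMeasurable 2).sub (memLp_const _)
    exact hS.integrable_sq.div_const _
  have hbound : ∀ n, ∫ ω, ‖f n ω‖ ∂μ
      ≤ 1 / (n : ℝ) ^ 2 + 2 * ((∑ k ∈ range n, ε (k + 1)) / (n : ℝ) ^ 2) := by
    intro n
    simp_rw [Real.norm_of_nonneg (hf0 n _), f, integral_div]
    calc (∫ ω, (∑ i ∈ Icc 1 n, (X i ω - μ[X i])) ^ 2 ∂μ) / (n : ℝ) ^ 3
        ≤ n * (1 + 2 * ∑ k ∈ range n, ε (k + 1)) / (n : ℝ) ^ 3 := by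
          gcongr; exact integral_sq_sum_sub_integral_le hX hX01 hε hcov n
      _ = 1 / (n : ℝ) ^ 2 + 2 * ((∑ k ∈ range n, ε (k + 1)) / (n : ℝ) ^ 2) := by
          rcases n.eq_zero_or_pos with rfl | hn
          · simp
          · field_simp
  have hsum' : Summable fun n => ∫ ω, ‖f n ω‖ ∂μ :=
    ((Real.summable_one_div_nat_pow.2 one_lt_two).add
      ((summable_sum_range_div_sq (fun k => hε (k + 1)) hsum).mul_left 2)).of_nonneg_of_le
      (fun n => integral_nonneg fun ω => norm_nonneg _) hbound
  filter_upwards [ae_summable_norm_of_summable_integral_norm hf hsum'] with ω hω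
  simpa only [Real.norm_of_nonneg (hf0 _ ω)] using hω

theorem ae_tendsto_sum_sub_integral_div (hX : ∀ i, AEMeasurable (X i) μ)
    (hX01 : ∀ i ω, X i ω ∈ Set.Icc 0 1) (hε : ∀ k, 0 ≤ ε k)
    (hsum : Summable fun k : ℕ => ε (k + 1) / (k + 1 : ℝ))
    (hcov : ∀ m n : ℕ, m ≠ n → |cov[X n, X m; μ]| ≤ ε ((n : ℤ) - m).natAbs) :
    ∀ᵐ ω ∂μ, Tendsto (fun n : ℕ => (∑ i ∈ Icc 1 n, (X i ω - μ[X i])) / n) atTop (𝓝 0) := by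
  filter_upwards [ae_summable_sq_sum_sub_integral_div_cube hX hX01 hε hsum hcov] with ω hω
  refine tendsto_div_of_abs_sub_le_one_of_summable (fun n => ?_) hω
  have hmean := (convex_Icc (0 : ℝ) 1).integral_mem isClosed_Icc (ae_of_all _ (hX01 (n + 1)))
    (memLp_one_iff_integrable.1
      (memLp_of_bounded (ae_of_all _ (hX01 (n + 1))) (hX (n + 1)).aestronglyMeasurable 1))
  rw [sum_Icc_succ_top (Nat.le_add_left 1 n), add_sub_cancel_left, abs_le]
  constructor <;> linarith [(hX01 (n + 1) ω).1, (hX01 (n + 1) ω).2, hmean.1, hmean.2]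

lemma covariance_indicator_one {A C : Set Ω} (hA : MeasurableSet A) (hC : MeasurableSet C) :
    cov[A.indicator 1, C.indicator 1; μ] = μ.real (A ∩ C) - μ.real A * μ.real C := by
  have hL2 : ∀ {s : Set Ω}, MeasurableSet s → MemLp (s.indicator (1 : Ω → ℝ)) 2 μ :=
    fun {s} hs => memLp_indicator_const 2 hs 1 (Or.inr (measure_ne_top μ s))
  rw [covariance_eq_sub (hL2 hA) (hL2 hC), ← Set.inter_indicator_one,
    integral_indicator_one (hA.inter hC), integral_indicator_one hA, integral_indicator_one hC]

end WeaklyCorrelated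

/-- Strong law of large numbers for weakly correlated indicator functions:
if `|μ(B_n ∩ B_m) − μ(B_n)μ(B_m)| ≤ ε(|n−m|)` with `Σ ε(k)/k < ∞`, then
`(1/n) Σ_{i=1}^n (1_{B_i} − μ(B_i)) → 0` almost everywhere. -/
theorem stmt3 {X : Type*} [MeasurableSpace X] (μ : Measure X) [IsProbabilityMeasure μ]
    (B : ℕ → Set X) (hB : ∀ n, MeasurableSet (B n))
    (ε : ℕ → ℝ) (hε : ∀ k, 0 ≤ ε k)
    (hsum : Summable (fun k : ℕ => ε (k+1) / (k+1 : ℝ)))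
    (hcorr : ∀ m n : ℕ, m ≠ n →
      |(μ (B n ∩ B m)).toReal - (μ (B n)).toReal * (μ (B m)).toReal| ≤ ε ((n : ℤ) - m).natAbs) :
    ∀ᵐ x ∂μ, Tendsto
      (fun n : ℕ => (1 / (n : ℝ)) * ∑ i ∈ Finset.Icc 1 n,
        ((B i).indicator (fun _ => (1:ℝ)) x - (μ (B i)).toReal))
      atTop (nhds 0) := by
  have h := ae_tendsto_sum_sub_integral_div (μ := μ) (X := fun i => (B i).indicator fun _ => 1)
    (fun i => (measurable_const.indicator (hB i)).aemeasurable)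
    (fun i x => by by_cases hx : x ∈ B i <;> simp [hx]) hε hsum
    fun m n hmn =>
      (congrArg abs (covariance_indicator_one (hB n) (hB m))).trans_le (hcorr m n hmn)
  have hmean : ∀ i, ∫ x, (B i).indicator (fun _ => (1 : ℝ)) x ∂μ = (μ (B i)).toReal :=
    fun i => integral_indicator_one (hB i)
  filter_upwards [h] with x hx
  simpa only [hmean, one_div_mul_eq_div] using hx
end

section
/- Let (X, μ) be a probability space and (B_n) measurable sets with |μ(B_n ∩ B_m) − μ(B_n)μ(B_m)| ≤ ε(|n − m|) where Σ_k ε(k)/k < ∞. If inf_n μ(B_n) > 0 then μ(limsup_n B_n) = 1, i.e. almost every point belongs to infinitely many of the B_n. -/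
/-!
Fix `N` and put `U_K = ⋃_{N ≤ n < N + K} B_n`. By the Chung–Erdős inequality (Cauchy–Schwarz
for `Σ 1_{B_n}` against `1_{U_K}`), `(Σ μ B_n)² ≤ μ U_K · Σ_{n,m} μ(B_n ∩ B_m)`. The correlation
bound turns the double sum into `(Σ μ B_n)² + K (1 + 2 Σ_{k<K} ε(k+1))`, and since
`Σ μ B_n ≥ cK` this gives `1 - μ U_K ≤ (1 + 2 Σ_{k<K} ε(k+1)) / (c² K)`. The right-hand side
tends to `0` by Kronecker's lemma applied to `Σ ε(k)/k`, so every tail union has full measure.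
-/

open MeasureTheory Filter Topology Finset

/-- A nonnegative form of Kronecker's lemma. -/
theorem tendsto_sum_range_div_nhds_zero_of_summable_div_succ {a : ℕ → ℝ} (ha : ∀ k, 0 ≤ a k)
    (hsum : Summable fun k : ℕ => a k / (k + 1)) :
    Tendsto (fun K : ℕ => (∑ k ∈ range K, a k) / K) atTop (𝓝 0) := by
  set c : ℕ → ℝ := fun k => a k / (k + 1)
  set T : ℕ → ℝ := fun j => ∑' i, c (i + j)
  have hc : ∀ k, 0 ≤ c k := fun k => div_nonneg (ha k) k.cast_add_one_pos.le
  -- `a k` is `k + 1` copies of `c k`; regrouping them by copy index bounds partial sums by tails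
  have hpartial : ∀ K, ∑ k ∈ range K, a k ≤ ∑ j ∈ range K, T j := fun K =>
    calc ∑ k ∈ range K, a k = ∑ k ∈ Ico 0 K, ∑ _j ∈ Ico 0 (k + 1), c k := by
          refine sum_congr (range_eq_Ico K) fun k _ => ?_
          simp only [sum_const, Nat.card_Ico, tsub_zero, nsmul_eq_mul, c]
          field_simp
          push_cast
          ring
      _ = ∑ j ∈ range K, ∑ i ∈ range (K - j), c (i + j) := by
          rw [← sum_Ico_Ico_comm, range_eq_Ico]
          refine sum_congr rfl fun j _ => ?_
          rw [sum_Ico_eq_sum_range]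
          simp_rw [add_comm j]
      _ ≤ ∑ j ∈ range K, T j := sum_le_sum fun j _ =>
          ((summable_nat_add_iff j).2 hsum).sum_le_tsum _ fun i _ => hc (i + j)
  refine squeeze_zero (fun K => div_nonneg (sum_nonneg fun k _ => ha k) K.cast_nonneg)
    (fun K => ?_) (tendsto_sum_nat_add c).cesaro
  rw [div_eq_inv_mul]
  exact mul_le_mul_of_nonneg_left (hpartial K) (by positivity)

/-- The Chung–Erdős inequality. -/
theorem sq_sum_measureReal_le_measureReal_biUnion_mul {X ι : Type*} [MeasurableSpace X]
    (μ : Measure X) [IsFiniteMeasure μ] {C : ι → Set X} (hC : ∀ n, MeasurableSet (C n))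
    (s : Finset ι) :
    (∑ n ∈ s, μ.real (C n)) ^ 2 ≤
      μ.real (⋃ n ∈ s, C n) * ∑ n ∈ s, ∑ m ∈ s, μ.real (C n ∩ C m) := by
  have hU : MeasurableSet (⋃ n ∈ s, C n) := s.measurableSet_biUnion fun n _ => hC n
  set G : Lp ℝ 2 μ := indicatorConstLp 2 hU (measure_ne_top μ _) 1
  set F : Lp ℝ 2 μ := ∑ n ∈ s, indicatorConstLp 2 (hC n) (measure_ne_top μ _) 1
  have hGF : inner ℝ G F = ∑ n ∈ s, μ.real (C n) := by
    simp only [F, G, inner_sum, L2.real_inner_indicatorConstLp_one_indicatorConstLp_one]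
    exact sum_congr rfl fun n hn => by
      rw [Set.inter_eq_right.2 (Set.subset_iUnion₂ (s := fun n (_ : n ∈ s) => C n) n hn)]
  have hGG : inner ℝ G G = μ.real (⋃ n ∈ s, C n) := by
    simp only [G, L2.real_inner_indicatorConstLp_one_indicatorConstLp_one, Set.inter_self]
  have hFF : inner ℝ F F = ∑ n ∈ s, ∑ m ∈ s, μ.real (C n ∩ C m) := by
    simp only [F, sum_inner, inner_sum, L2.real_inner_indicatorConstLp_one_indicatorConstLp_one]
    exact sum_comm
  rw [sq, ← hGF, ← hGG, ← hFF]
  exact real_inner_mul_inner_self_le G F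

theorem sum_range_natAbs_sub_le {g : ℕ → ℝ} (hg : ∀ k, 0 ≤ g k) {n K : ℕ} (hn : n < K) :
    ∑ m ∈ range K, g ((n : ℤ) - m).natAbs ≤ g 0 + 2 * ∑ k ∈ range K, g (k + 1) := by
  have hmono : ∀ L ≤ K, ∑ k ∈ range L, g (k + 1) ≤ ∑ k ∈ range K, g (k + 1) := fun L hL =>
    sum_le_sum_of_subset_of_nonneg (range_subset_range.2 hL) fun k _ _ => hg _
  have hleft : ∑ m ∈ range (n + 1), g ((n : ℤ) - m).natAbs = ∑ k ∈ range n, g (k + 1) + g 0 :=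
    calc ∑ m ∈ range (n + 1), g ((n : ℤ) - m).natAbs = ∑ m ∈ range (n + 1), g (n + 1 - 1 - m) :=
          sum_congr rfl fun m hm => congr_arg g (by have := mem_range.1 hm; omega)
      _ = ∑ k ∈ range n, g (k + 1) + g 0 := by rw [sum_range_reflect, sum_range_succ']
  have hright : ∑ m ∈ Ico (n + 1) K, g ((n : ℤ) - m).natAbs =
      ∑ k ∈ range (K - (n + 1)), g (k + 1) := by
    rw [sum_Ico_eq_sum_range]
    exact sum_congr rfl fun k _ => congr_arg g (by omega)
  rw [← sum_range_add_sum_Ico _ hn, hleft, hright]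
  linarith [hmono n hn.le, hmono (K - (n + 1)) (by omega)]

section WeakCorrelation

variable {X : Type*} [MeasurableSpace X] {μ : Measure X} [IsProbabilityMeasure μ]
  {C : ℕ → Set X} {ε : ℕ → ℝ}

theorem sum_sum_measureReal_inter_le (hε : ∀ k, 0 ≤ ε k)
    (hcorr : ∀ m n : ℕ, m ≠ n →
      |μ.real (C n ∩ C m) - μ.real (C n) * μ.real (C m)| ≤ ε ((n : ℤ) - m).natAbs) (K : ℕ) :
    ∑ n ∈ range K, ∑ m ∈ range K, μ.real (C n ∩ C m) ≤
      (∑ n ∈ range K, μ.real (C n)) ^ 2 + K * (1 + 2 * ∑ k ∈ range K, ε (k + 1)) := by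
  -- `g` agrees with `ε` off the diagonal and bounds the diagonal terms by `1`
  set g := Function.update ε 0 1
  have hg_of_ne : ∀ k ≠ 0, g k = ε k := fun k hk => Function.update_of_ne hk _ _
  have hg : ∀ k, 0 ≤ g k := fun k => by
    rcases eq_or_ne k 0 with rfl | hk
    · simp [g]
    · exact hg_of_ne k hk ▸ hε k
  have hpair : ∀ n m,
      μ.real (C n ∩ C m) ≤ μ.real (C n) * μ.real (C m) + g ((n : ℤ) - m).natAbs := by
    intro n m
    rcases eq_or_ne n m with rfl | hnm
    · simp only [sub_self, Int.natAbs_zero, g, Function.update_self]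
      nlinarith [measureReal_le_one (μ := μ) (s := C n ∩ C n),
        measureReal_nonneg (μ := μ) (s := C n)]
    · rw [hg_of_ne _ (by omega)]
      linarith [le_of_abs_le (hcorr m n hnm.symm)]
  calc ∑ n ∈ range K, ∑ m ∈ range K, μ.real (C n ∩ C m)
      ≤ ∑ n ∈ range K, ∑ m ∈ range K, (μ.real (C n) * μ.real (C m) + g ((n : ℤ) - m).natAbs) :=
        sum_le_sum fun n _ => sum_le_sum fun m _ => hpair n m
    _ = (∑ n ∈ range K, μ.real (C n)) ^ 2 +
          ∑ n ∈ range K, ∑ m ∈ range K, g ((n : ℤ) - m).natAbs := by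
        simp only [sum_add_distrib, sq, sum_mul_sum]
    _ ≤ (∑ n ∈ range K, μ.real (C n)) ^ 2 + ∑ _n ∈ range K, (1 + 2 * ∑ k ∈ range K, ε (k + 1)) := by
        gcongr with n hn
        simpa [g, hg_of_ne] using sum_range_natAbs_sub_le hg (mem_range.1 hn)
    _ = _ := by rw [sum_const, card_range, nsmul_eq_mul]

theorem one_sub_measureReal_biUnion_range_le (hC : ∀ n, MeasurableSet (C n))
    (hε : ∀ k, 0 ≤ ε k)
    (hcorr : ∀ m n : ℕ, m ≠ n →
      |μ.real (C n ∩ C m) - μ.real (C n) * μ.real (C m)| ≤ ε ((n : ℤ) - m).natAbs)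
    {c : ℝ} (hc : 0 < c) (hcC : ∀ n, c ≤ μ.real (C n)) {K : ℕ} (hK : 0 < K) :
    1 - μ.real (⋃ n ∈ range K, C n) ≤ (1 + 2 * ∑ k ∈ range K, ε (k + 1)) / (c ^ 2 * K) := by
  set A := ∑ n ∈ range K, μ.real (C n)
  set t := μ.real (⋃ n ∈ range K, C n)
  set b := (K : ℝ) * (1 + 2 * ∑ k ∈ range K, ε (k + 1))
  have hKpos : (0 : ℝ) < K := Nat.cast_pos.2 hK
  have hb : 0 ≤ b :=
    mul_nonneg hKpos.le (by linarith [sum_nonneg fun k (_ : k ∈ range K) => hε (k + 1)])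
  have ht0 : 0 ≤ t := measureReal_nonneg
  have ht1 : t ≤ 1 := measureReal_le_one
  have hcA : c * K ≤ A := by
    simpa [mul_comm] using sum_le_sum fun n (_ : n ∈ range K) => hcC n
  have hA : A ^ 2 * (1 - t) ≤ b := by
    have hD := mul_le_mul_of_nonneg_left (sum_sum_measureReal_inter_le hε hcorr K) ht0
    nlinarith [sq_sum_measureReal_le_measureReal_biUnion_mul μ hC (range K)]
  have hcK : K * ((1 - t) * (c ^ 2 * K)) ≤ K * (1 + 2 * ∑ k ∈ range K, ε (k + 1)) :=
    calc K * ((1 - t) * (c ^ 2 * K)) = (c * K) ^ 2 * (1 - t) := by ring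
      _ ≤ A ^ 2 * (1 - t) :=
        mul_le_mul_of_nonneg_right (pow_le_pow_left₀ (by positivity) hcA 2) (sub_nonneg.2 ht1)
      _ ≤ _ := hA
  rw [le_div_iff₀ (by positivity)]
  exact le_of_mul_le_mul_left hcK hKpos

theorem measure_iUnion_eq_one_of_abs_measureReal_inter_sub_le (hC : ∀ n, MeasurableSet (C n))
    (hε : ∀ k, 0 ≤ ε k)
    (hcorr : ∀ m n : ℕ, m ≠ n →
      |μ.real (C n ∩ C m) - μ.real (C n) * μ.real (C m)| ≤ ε ((n : ℤ) - m).natAbs)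
    (hces : Tendsto (fun K : ℕ => (∑ k ∈ range K, ε (k + 1)) / K) atTop (𝓝 0))
    {c : ℝ} (hc : 0 < c) (hcC : ∀ n, c ≤ μ.real (C n)) :
    μ (⋃ n, C n) = 1 := by
  have hlim : Tendsto (fun K : ℕ => (1 + 2 * ∑ k ∈ range K, ε (k + 1)) / (c ^ 2 * K))
      atTop (𝓝 0) := by
    have := ((tendsto_inv_atTop_nhds_zero_nat (𝕜 := ℝ)).add (hces.const_mul 2)).div_const (c ^ 2)
    rw [mul_zero, add_zero, zero_div] at this
    refine this.congr' (eventually_atTop.2 ⟨1, fun K hK => ?_⟩)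
    have : (K : ℝ) ≠ 0 := by positivity
    field_simp
  have hbound : ∀ᶠ K in atTop, 1 - μ.real (⋃ n, C n) ≤
      (1 + 2 * ∑ k ∈ range K, ε (k + 1)) / (c ^ 2 * K) :=
    eventually_atTop.2 ⟨1, fun K hK =>
      (sub_le_sub_left (measureReal_mono
        (Set.iUnion₂_subset fun n _ => Set.subset_iUnion C n)) 1).trans
        (one_sub_measureReal_biUnion_range_le hC hε hcorr hc hcC hK)⟩
  have hle := ge_of_tendsto hlim hbound
  have h1 : μ.real (⋃ n, C n) = 1 := le_antisymm measureReal_le_one (by linarith)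
  exact (ENNReal.toReal_eq_one_iff _).1 h1

end WeakCorrelation

/-- Under the weak correlation condition `|μ(B_n ∩ B_m) − μ(B_n)μ(B_m)| ≤ ε(|n−m|)` with
`Σ ε(k)/k < ∞`, if `inf_n μ(B_n) > 0` then `μ(limsup_n B_n) = 1`. -/
theorem stmt4 {X : Type*} [MeasurableSpace X] (μ : Measure X) [IsProbabilityMeasure μ]
    (B : ℕ → Set X) (hB : ∀ n, MeasurableSet (B n))
    (ε : ℕ → ℝ) (hε : ∀ k, 0 ≤ ε k)
    (hsum : Summable (fun k : ℕ => ε (k+1) / (k+1 : ℝ)))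
    (hcorr : ∀ m n : ℕ, m ≠ n →
      |(μ (B n ∩ B m)).toReal - (μ (B n)).toReal * (μ (B m)).toReal| ≤ ε ((n : ℤ) - m).natAbs)
    (hinf : ∃ c : ℝ, 0 < c ∧ ∀ n, c ≤ (μ (B n)).toReal) :
    μ (⋂ N : ℕ, ⋃ n : ℕ, ⋃ (_ : N ≤ n), B n) = 1 := by
  obtain ⟨c, hc, hcB⟩ := hinf
  have hces := tendsto_sum_range_div_nhds_zero_of_summable_div_succ (fun k => hε (k + 1)) hsum
  have htail : ∀ N, μ (⋃ n, ⋃ (_ : N ≤ n), B n) = 1 := fun N => by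
    rw [show ⋃ n, ⋃ (_ : N ≤ n), B n = ⋃ n, B (n + N) from Set.iUnion_ge_eq_iUnion_nat_add B N]
    refine measure_iUnion_eq_one_of_abs_measureReal_inter_sub_le (fun n => hB _) hε
      (fun m n hmn => ?_) hces hc fun n => hcB _
    have hshift : ((n + N : ℕ) : ℤ) - (m + N : ℕ) = n - m := by push_cast; ring
    have h := hcorr (m + N) (n + N) (by omega)
    rwa [hshift] at h
  have hmeas : ∀ N, MeasurableSet (⋃ n, ⋃ (_ : N ≤ n), B n) := fun N =>
    .iUnion fun n => .iUnion fun _ => hB n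
  rw [← prob_compl_eq_zero_iff (.iInter hmeas), Set.compl_iInter]
  exact measure_iUnion_null fun N => (prob_compl_eq_zero_iff (hmeas N)).2 (htail N)
end

section
/- Let α be irrational with denominators (q_n). Fix x ≠ y on the circle and n ∈ ℕ with ‖x − y‖ < 1/(6 q_n). Then at least one of the following holds: (i) 0 ∉ ⋃_{k=0}^{⌊q_{n+1}/6⌋} R_α^k [x, y]; (ii) 0 ∉ ⋃_{k=−⌊q_{n+1}/6⌋}^{0} R_α^k [x, y]; (iii) 0 ∈ ⋃_{k=0}^{q_n − 1} R_α^k [x, y]. -/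
/-- Iterates of the Gauss map applied to the fractional part of `α`. -/
noncomputable def gaussIter (α : ℝ) : ℕ → ℝ
  | 0 => Int.fract α
  | n+1 => Int.fract (gaussIter α n)⁻¹

/-- Partial quotients of the continued fraction expansion of `α` (`cfA α n` is `a_n`). -/
noncomputable def cfA (α : ℝ) : ℕ → ℕ
  | 0 => 0
  | n+1 => (⌊(gaussIter α n)⁻¹⌋).toNat

/-- Denominators of the continued fraction expansion of `α`. -/
noncomputable def cfQ (α : ℝ) : ℕ → ℕ
  | 0 => 1
  | 1 => cfA α 1
  | n+2 => cfA α (n+2) * cfQ α (n+1) + cfQ α n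


/-- The shortest arc joining `a` and `b` on the circle (for `‖a − b‖ < 1/2` this is the
set of points lying between `a` and `b` along the shorter way around). -/
def arc (a b : AddCircle (1:ℝ)) : Set (AddCircle (1:ℝ)) :=
  {z | ‖z - a‖ + ‖b - z‖ = ‖b - a‖}

local notation "𝕋" => AddCircle (1 : ℝ)

section ContinuedFraction

open Finset

variable {α : ℝ}

lemma gaussIter_nonneg (α : ℝ) (n : ℕ) : 0 ≤ gaussIter α n := by
  cases n <;> exact Int.fract_nonneg _

lemma gaussIter_lt_one (α : ℝ) (n : ℕ) : gaussIter α n < 1 := by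
  cases n <;> exact Int.fract_lt_one _

lemma irrational_gaussIter (hα : Irrational α) (n : ℕ) : Irrational (gaussIter α n) := by
  induction n with
  | zero => exact hα.sub_intCast ⌊α⌋
  | succ n ih => exact ih.inv.sub_intCast ⌊(gaussIter α n)⁻¹⌋

lemma gaussIter_pos (hα : Irrational α) (n : ℕ) : 0 < gaussIter α n :=
  (gaussIter_nonneg α n).lt_of_ne' (irrational_gaussIter hα n).ne_zero

lemma cfA_succ_add_gaussIter_succ (α : ℝ) (n : ℕ) :
    (cfA α (n + 1) : ℝ) + gaussIter α (n + 1) = (gaussIter α n)⁻¹ := by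
  have h : 0 ≤ ⌊(gaussIter α n)⁻¹⌋ := Int.floor_nonneg.2 (inv_nonneg.2 (gaussIter_nonneg α n))
  have hcast : (cfA α (n + 1) : ℝ) = ⌊(gaussIter α n)⁻¹⌋ := by
    simp only [cfA]; exact_mod_cast Int.toNat_of_nonneg h
  rw [hcast, gaussIter, Int.floor_add_fract]

lemma gaussIter_mul_cfA_add_gaussIter (hα : Irrational α) (n : ℕ) :
    gaussIter α n * (cfA α (n + 1) + gaussIter α (n + 1)) = 1 := by
  rw [cfA_succ_add_gaussIter_succ, mul_inv_cancel₀ (gaussIter_pos hα n).ne']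

lemma one_le_cfA_succ (hα : Irrational α) (n : ℕ) : 1 ≤ cfA α (n + 1) := by
  have h := cfA_succ_add_gaussIter_succ α n
  have h₁ : 1 < (gaussIter α n)⁻¹ := (one_lt_inv₀ (gaussIter_pos hα n)).2 (gaussIter_lt_one α n)
  have h₂ : (0 : ℝ) < cfA α (n + 1) := by linarith [gaussIter_lt_one α (n + 1)]
  exact_mod_cast h₂

lemma cfQ_pos (hα : Irrational α) (n : ℕ) : 0 < cfQ α n := by
  induction n using Nat.twoStepInduction with
  | zero => exact Nat.one_pos
  | one => exact one_le_cfA_succ hα 0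
  | more n ih _ => exact Nat.add_pos_right _ ih

/-- Numerators of the convergents of `α` itself (whereas `cfQ` only sees `Int.fract α`). -/
noncomputable def cfP (α : ℝ) : ℕ → ℤ
  | 0 => ⌊α⌋
  | 1 => cfA α 1 * ⌊α⌋ + 1
  | n + 2 => cfA α (n + 2) * cfP α (n + 1) + cfP α n

lemma cfP_succ_mul_cfQ_sub_cfP_mul_cfQ_succ (α : ℝ) (n : ℕ) :
    cfP α (n + 1) * cfQ α n - cfP α n * cfQ α (n + 1) = (-1) ^ n := by
  induction n with
  | zero => simp only [cfP, cfQ]; push_cast; ring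
  | succ n ih =>
    simp only [cfP, cfQ]
    push_cast
    linear_combination -ih

lemma isCoprime_cfP_cfQ (α : ℝ) (n : ℕ) : IsCoprime (cfP α n) (cfQ α n : ℤ) := by
  have hsq : ((-1 : ℤ) ^ n) ^ 2 = 1 := by rw [← pow_mul, pow_mul', neg_one_sq, one_pow]
  exact ⟨-(-1) ^ n * cfQ α (n + 1), (-1) ^ n * cfP α (n + 1), by
    linear_combination (-1) ^ n * cfP_succ_mul_cfQ_sub_cfP_mul_cfQ_succ α n + hsq⟩

lemma cfQ_mul_sub_cfP (hα : Irrational α) (n : ℕ) :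
    (cfQ α n : ℝ) * α - cfP α n = (-1) ^ n * ∏ j ∈ range (n + 1), gaussIter α j := by
  have hg₀ : gaussIter α 0 = α - ⌊α⌋ := rfl
  induction n using Nat.twoStepInduction with
  | zero => simp [cfQ, cfP, hg₀]
  | one =>
    simp only [cfQ, cfP, prod_range_succ, prod_range_zero]
    push_cast
    linear_combination gaussIter_mul_cfA_add_gaussIter hα 0 - (cfA α 1 : ℝ) * hg₀
  | more n h₀ h₁ =>
    rw [prod_range_succ _ (n + 1)] at h₁
    rw [prod_range_succ _ (n + 2), prod_range_succ _ (n + 1)]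
    simp only [cfQ, cfP]
    push_cast
    linear_combination (cfA α (n + 2) : ℝ) * h₁ + h₀ -
      (-1) ^ n * (∏ j ∈ range (n + 1), gaussIter α j) * gaussIter_mul_cfA_add_gaussIter hα (n + 1)

lemma cfQ_succ_mul_abs_cfQ_mul_sub_cfP_lt_one (hα : Irrational α) (n : ℕ) :
    (cfQ α (n + 1) : ℝ) * |cfQ α n * α - cfP α n| < 1 := by
  set P : ℕ → ℝ := fun k => ∏ j ∈ range (k + 1), gaussIter α j
  have hPpos (k : ℕ) : 0 < P k := prod_pos fun j _ => gaussIter_pos hα j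
  have hθ₀ := cfQ_mul_sub_cfP hα n
  have hθ₁ := cfQ_mul_sub_cfP hα (n + 1)
  have hdet : ((cfP α (n + 1) * cfQ α n - cfP α n * cfQ α (n + 1) : ℤ) : ℝ) = (-1) ^ n := by
    exact_mod_cast cfP_succ_mul_cfQ_sub_cfP_mul_cfQ_succ α n
  push_cast at hdet
  have hsq : ((-1 : ℝ) ^ n) ^ 2 = 1 := by rw [← pow_mul, pow_mul', neg_one_sq, one_pow]
  -- `qₙ θₙ₊₁ - qₙ₊₁ θₙ = -(-1)ⁿ` for `θₖ = qₖ α - pₖ = (-1)ᵏ P k`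
  have hsum : (cfQ α (n + 1) : ℝ) * P n + cfQ α n * P (n + 1) = 1 := by
    linear_combination (-1) ^ n * ((cfQ α n : ℝ) * hθ₁ - cfQ α (n + 1) * hθ₀ + hdet) -
      ((cfQ α (n + 1) : ℝ) * P n + cfQ α n * P (n + 1) - 1) * hsq
  have hq : (0 : ℝ) < cfQ α n := by exact_mod_cast cfQ_pos hα n
  rw [hθ₀, abs_mul, abs_pow, abs_neg, abs_one, one_pow, one_mul, abs_of_pos (hPpos n)]
  nlinarith [hPpos (n + 1)]

/-- Since `pₙ` and `qₙ` are coprime, `m pₙ - p qₙ` is a nonzero integer; and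
`qₙ (m α - p) = m (qₙ α - pₙ) + (m pₙ - p qₙ)`. -/
lemma one_sub_div_cfQ_succ_lt_cfQ_mul_abs_sub (hα : Irrational α) {n m : ℕ}
    (hm : ¬ cfQ α n ∣ m) (p : ℤ) :
    1 - m / (cfQ α (n + 1) : ℝ) < cfQ α n * |m * α - p| := by
  have hm₀ : (0 : ℝ) < m := by
    exact_mod_cast Nat.pos_of_ne_zero (by rintro rfl; exact hm (dvd_zero _))
  have hq₁ : (0 : ℝ) < cfQ α (n + 1) := by exact_mod_cast cfQ_pos hα (n + 1)
  have hne : (m : ℤ) * cfP α n - p * cfQ α n ≠ 0 := fun h =>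
    hm <| Int.natCast_dvd_natCast.1 <|
      (isCoprime_cfP_cfQ α n).symm.dvd_of_dvd_mul_right ⟨p, by linear_combination h⟩
  have hint : (1 : ℝ) ≤ |(m : ℝ) * cfP α n - p * cfQ α n| := by
    exact_mod_cast Int.one_le_abs hne
  have hθ : (m : ℝ) * |cfQ α n * α - cfP α n| < m / cfQ α (n + 1) := by
    rw [lt_div_iff₀ hq₁]
    nlinarith [cfQ_succ_mul_abs_cfQ_mul_sub_cfP_lt_one hα n]
  have hsplit : (cfQ α n : ℝ) * (m * α - p) =
      (m * cfP α n - p * cfQ α n) + m * (cfQ α n * α - cfP α n) := by ring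
  have htri := abs_sub_abs_le_abs_sub ((m : ℝ) * cfP α n - p * cfQ α n)
    (-(m * (cfQ α n * α - cfP α n)))
  rw [abs_neg, sub_neg_eq_add, ← hsplit, abs_mul, abs_mul, Nat.abs_cast, Nat.abs_cast] at htri
  linarith

end ContinuedFraction

section Circle

open Set

lemma exists_coe_eq_and_abs_eq_norm (z : 𝕋) : ∃ c : ℝ, (c : 𝕋) = z ∧ |c| = ‖z‖ := by
  induction z using QuotientAddGroup.induction_on with
  | H r => exact ⟨r - round r, by simp, by rw [UnitAddCircle.norm_eq]⟩

lemma coe_add_intCast (r : ℝ) (m : ℤ) : ((r + m : ℝ) : 𝕋) = r := by simp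

lemma eq_of_coe_eq_of_abs_sub_lt_one {a b : ℝ} (h : (a : 𝕋) = b) (hab : |a - b| < 1) :
    a = b := by
  obtain ⟨k, hk⟩ := (AddCircle.coe_eq_zero_iff (p := 1)).1 (by rw [AddCircle.coe_sub, h, sub_self] :
    ((a - b : ℝ) : 𝕋) = 0)
  rw [zsmul_eq_mul, mul_one] at hk
  rw [← hk, ← Int.cast_abs, ← Int.cast_one, Int.cast_lt, Int.abs_lt_one_iff] at hab
  rw [← sub_eq_zero, ← hk, hab, Int.cast_zero]

lemma norm_coe_of_abs_le_half {c : ℝ} (h : |c| ≤ 1 / 2) : ‖(c : 𝕋)‖ = |c| :=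
  (AddCircle.norm_coe_eq_abs_iff (p := 1) one_ne_zero).2 (by simpa using h)

lemma abs_add_abs_sub_eq_abs_iff_mem_uIcc {c δ : ℝ} : |c| + |δ - c| = |δ| ↔ c ∈ uIcc 0 δ := by
  have h := abs_add_eq_add_abs_iff c (δ - c)
  rw [add_sub_cancel] at h
  rw [eq_comm, h, mem_uIcc]
  constructor <;> rintro (h | h) <;> [left; right; left; right] <;> constructor <;>
    linarith [h.1, h.2]

lemma arc_eq_image_uIcc {x y : 𝕋} {δ : ℝ} (hδ : (δ : 𝕋) = y - x) (hδ' : |δ| < 1 / 2) :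
    arc x y = (fun c : ℝ => x + c) '' uIcc 0 δ := by
  have hyx : ‖y - x‖ = |δ| := by rw [← hδ, norm_coe_of_abs_le_half hδ'.le]
  ext z
  constructor
  · intro hz
    obtain ⟨c, hc, hc'⟩ := exists_coe_eq_and_abs_eq_norm (z - x)
    obtain ⟨d, hd, hd'⟩ := exists_coe_eq_and_abs_eq_norm (y - z)
    change ‖z - x‖ + ‖y - z‖ = ‖y - x‖ at hz
    rw [← hc', ← hd', hyx] at hz
    have hdc : d = δ - c := by
      refine eq_of_coe_eq_of_abs_sub_lt_one ?_ ?_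
      · rw [AddCircle.coe_sub, hc, hd, hδ]; abel
      · have := abs_sub_le d 0 (δ - c)
        have := abs_sub δ c
        simp only [sub_zero, zero_sub, abs_neg] at *
        linarith [abs_nonneg c, abs_nonneg d]
    refine ⟨c, abs_add_abs_sub_eq_abs_iff_mem_uIcc.1 (hdc ▸ hz), ?_⟩
    simp only [hc, add_sub_cancel]
  · rintro ⟨c, hc, rfl⟩
    have hcδ := abs_add_abs_sub_eq_abs_iff_mem_uIcc.2 hc
    have hyc : y - (x + c) = ((δ - c : ℝ) : 𝕋) := by rw [AddCircle.coe_sub, hδ]; abel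
    change ‖x + c - x‖ + ‖y - (x + c)‖ = ‖y - x‖
    rw [add_sub_cancel_left, hyc, hyx, norm_coe_of_abs_le_half, norm_coe_of_abs_le_half]
    all_goals linarith [abs_nonneg c, abs_nonneg (δ - c)]

lemma norm_sub_le_of_mem_arc {x y u v : 𝕋} (hxy : ‖y - x‖ < 1 / 2) (hu : u ∈ arc x y)
    (hv : v ∈ arc x y) : ‖v - u‖ ≤ ‖y - x‖ := by
  obtain ⟨δ, hδ, hδ'⟩ := exists_coe_eq_and_abs_eq_norm (y - x)
  rw [arc_eq_image_uIcc hδ (hδ' ▸ hxy)] at hu hv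
  obtain ⟨c₁, hc₁, rfl⟩ := hu
  obtain ⟨c₂, hc₂, rfl⟩ := hv
  have h : |c₂ - c₁| ≤ |δ| := by
    simpa using abs_sub_le_of_uIcc_subset_uIcc (uIcc_subset_uIcc hc₁ hc₂)
  rw [show x + c₂ - (x + c₁) = ((c₂ - c₁ : ℝ) : 𝕋) by rw [AddCircle.coe_sub]; abel, ← hδ',
    norm_coe_of_abs_le_half (by linarith)]
  exact h

lemma coe_mem_arc_of_mem_uIcc {x y : 𝕋} (hxy : ‖y - x‖ < 1 / 2) {s t c : ℝ}
    (hs : (s : 𝕋) ∈ arc x y) (ht : (t : 𝕋) ∈ arc x y) (hst : |t - s| < 1 / 2)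
    (hc : c ∈ uIcc s t) : (c : 𝕋) ∈ arc x y := by
  obtain ⟨δ, hδ, hδ'⟩ := exists_coe_eq_and_abs_eq_norm (y - x)
  rw [arc_eq_image_uIcc hδ (hδ' ▸ hxy)] at hs ht ⊢
  obtain ⟨c₁, hc₁, hs'⟩ := hs
  obtain ⟨c₂, hc₂, ht'⟩ := ht
  have h₁₂ : |c₂ - c₁| ≤ |δ| := by
    simpa using abs_sub_le_of_uIcc_subset_uIcc (uIcc_subset_uIcc hc₁ hc₂)
  have hlift : c₂ - c₁ = t - s := by
    refine eq_of_coe_eq_of_abs_sub_lt_one ?_ ?_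
    · simp only [AddCircle.coe_sub, ← hs', ← ht']; abel
    · linarith [abs_sub (c₂ - c₁) (t - s)]
  refine ⟨c₁ + (c - s), uIcc_subset_uIcc hc₁ hc₂ ?_, ?_⟩
  · rw [mem_uIcc] at hc ⊢
    rcases hc with h | h <;> [left; right] <;> constructor <;> linarith [h.1, h.2]
  · simp only [AddCircle.coe_add, AddCircle.coe_sub, ← add_assoc, hs']
    abel

end Circle

section Orbit

variable {α : ℝ} {x y : 𝕋} {n k₁ k₂ : ℕ}

lemma cfQ_dvd_add_of_mem_arc (hα : Irrational α) (hxy : ‖y - x‖ < 1 / (6 * (cfQ α n : ℝ)))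
    (hk : 3 * (k₁ + k₂) ≤ cfQ α (n + 1)) (h₁ : ((-(k₁ * α) : ℝ) : 𝕋) ∈ arc x y)
    (h₂ : ((k₂ * α : ℝ) : 𝕋) ∈ arc x y) : cfQ α n ∣ k₁ + k₂ := by
  by_contra hm
  have hq : (1 : ℝ) ≤ cfQ α n := by exact_mod_cast cfQ_pos hα n
  have hq₁ : (0 : ℝ) < cfQ α (n + 1) := by exact_mod_cast cfQ_pos hα (n + 1)
  have hk' : ((k₁ + k₂ : ℕ) : ℝ) / cfQ α (n + 1) ≤ 1 / 3 := by
    rw [div_le_iff₀ hq₁]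
    have : (3 * (k₁ + k₂) : ℝ) ≤ cfQ α (n + 1) := by exact_mod_cast hk
    push_cast
    linarith
  have hxy' : cfQ α n * ‖y - x‖ < 1 / 6 := by
    rw [lt_div_iff₀ (by positivity)] at hxy; linarith
  have hnorm : ‖(((k₁ + k₂ : ℕ) * α : ℝ) : 𝕋)‖ ≤ ‖y - x‖ := by
    convert norm_sub_le_of_mem_arc (by nlinarith [norm_nonneg (y - x)]) h₁ h₂ using 2
    rw [← AddCircle.coe_sub]; push_cast; ring_nf
  have := one_sub_div_cfQ_succ_lt_cfQ_mul_abs_sub hα hm (round ((k₁ + k₂ : ℕ) * α))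
  rw [← UnitAddCircle.norm_eq] at this
  nlinarith

lemma exists_lt_cfQ_coe_neg_mem_arc (hα : Irrational α)
    (hxy : ‖y - x‖ < 1 / (6 * (cfQ α n : ℝ))) (hk : 3 * (k₁ + k₂) ≤ cfQ α (n + 1))
    (h₁ : ((-(k₁ * α) : ℝ) : 𝕋) ∈ arc x y) (h₂ : ((k₂ * α : ℝ) : 𝕋) ∈ arc x y) :
    ∃ r < cfQ α n, ((-(r * α) : ℝ) : 𝕋) ∈ arc x y := by
  obtain ⟨a, ha⟩ := cfQ_dvd_add_of_mem_arc hα hxy hk h₁ h₂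
  have hq := cfQ_pos hα n
  have hq' : (1 : ℝ) ≤ cfQ α n := by exact_mod_cast hq
  have hhalf : ‖y - x‖ < 1 / 2 := by
    rw [lt_div_iff₀ (by positivity)] at hxy; nlinarith [norm_nonneg (y - x)]
  set θ : ℝ := cfQ α n * α - cfP α n
  have hθ : (cfQ α (n + 1) : ℝ) * |θ| < 1 := cfQ_succ_mul_abs_cfQ_mul_sub_cfP_lt_one hα n
  have haq : (a : ℝ) * cfQ α n = k₁ + k₂ := by exact_mod_cast (ha.trans (mul_comm _ _)).symm
  have h3a : (3 * a : ℝ) ≤ cfQ α (n + 1) := by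
    have : 3 * a ≤ cfQ α (n + 1) :=
      calc 3 * a ≤ 3 * (cfQ α n * a) := by gcongr; exact Nat.le_mul_of_pos_left a hq
        _ ≤ cfQ α (n + 1) := ha ▸ hk
    exact_mod_cast this
  obtain ⟨b, r, hr, hk₁⟩ : ∃ b r, r < cfQ α n ∧ k₁ = cfQ α n * b + r :=
    ⟨_, _, Nat.mod_lt _ hq, (Nat.div_add_mod _ _).symm⟩
  have hb : (b : ℝ) ≤ a := by
    exact_mod_cast Nat.le_of_mul_le_mul_left (by omega : cfQ α n * b ≤ cfQ α n * a) hq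
  have hk₁' : (k₁ : ℝ) = cfQ α n * b + r := by exact_mod_cast hk₁
  refine ⟨r, hr, ?_⟩
  have hlast : -(k₁ * α) + a * θ = k₂ * α + ((-(a * cfP α n) : ℤ) : ℝ) := by
    push_cast; linear_combination α * haq
  have hmid : -(k₁ * α) + b * θ = -(r * α) + ((-(b * cfP α n) : ℤ) : ℝ) := by
    push_cast; linear_combination -α * hk₁'
  have hmem := coe_mem_arc_of_mem_uIcc hhalf h₁ (t := -(k₁ * α) + a * θ)
    (c := -(k₁ * α) + b * θ) (by rwa [hlast, coe_add_intCast]) ?_ ?_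
  · rwa [hmid, coe_add_intCast] at hmem
  · rw [add_sub_cancel_left, abs_mul, Nat.abs_cast]; nlinarith [abs_nonneg θ]
  · rw [Set.mem_uIcc]
    rcases le_total 0 θ with h | h
    · left; constructor <;> nlinarith [Nat.cast_nonneg (α := ℝ) b]
    · right; constructor <;> nlinarith [Nat.cast_nonneg (α := ℝ) b]

end Orbit

theorem stmt5_general (α : ℝ) (hα : Irrational α)
    (x y : AddCircle (1:ℝ)) (n : ℕ)
    (hd : ‖x - y‖ < 1 / (6 * (cfQ α n : ℝ))) :
    (∀ k : ℕ, k ≤ cfQ α (n+1) / 6 →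
        (0 : AddCircle (1:ℝ)) ∉ (fun z => z + (((k : ℝ) * α : ℝ) : AddCircle (1:ℝ))) '' arc x y) ∨
    (∀ k : ℕ, k ≤ cfQ α (n+1) / 6 →
        (0 : AddCircle (1:ℝ)) ∉ (fun z => z - (((k : ℝ) * α : ℝ) : AddCircle (1:ℝ))) '' arc x y) ∨
    (∃ k : ℕ, k < cfQ α n ∧
        (0 : AddCircle (1:ℝ)) ∈ (fun z => z + (((k : ℝ) * α : ℝ) : AddCircle (1:ℝ))) '' arc x y) := by
  rw [or_iff_not_imp_left, or_iff_not_imp_left]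
  intro hforward hbackward
  push Not at hforward hbackward
  obtain ⟨k₁, hk₁, z, hz, hz0⟩ := hforward
  obtain ⟨k₂, hk₂, w, hw, hw0⟩ := hbackward
  rw [← eq_neg_iff_add_eq_zero, ← AddCircle.coe_neg] at hz0
  rw [sub_eq_zero] at hw0
  obtain ⟨r, hr, hmem⟩ := exists_lt_cfQ_coe_neg_mem_arc hα (by rwa [norm_sub_rev])
    (by omega : 3 * (k₁ + k₂) ≤ cfQ α (n + 1)) (hz0 ▸ hz) (hw0 ▸ hw)
  exact ⟨r, hr, _, hmem, by simp⟩

/-- For irrational `α` with denominators `q_n`, `x ≠ y` with `‖x−y‖ < 1/(6 q_n)`,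
either the forward orbit of the arc `[x,y]` up to time `⌊q_{n+1}/6⌋` avoids `0`, or the
backward orbit up to time `⌊q_{n+1}/6⌋` avoids `0`, or the forward orbit hits `0` before
time `q_n`. -/
theorem stmt5 (α : ℝ) (hα : Irrational α) (hα1 : α ∈ Set.Ioo (0:ℝ) 1)
    (x y : AddCircle (1:ℝ)) (hxy : x ≠ y) (n : ℕ)
    (hd : ‖x - y‖ < 1 / (6 * (cfQ α n : ℝ))) :
    (∀ k : ℕ, k ≤ cfQ α (n+1) / 6 →
        (0 : AddCircle (1:ℝ)) ∉ (fun z => z + (((k : ℝ) * α : ℝ) : AddCircle (1:ℝ))) '' arc x y) ∨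
    (∀ k : ℕ, k ≤ cfQ α (n+1) / 6 →
        (0 : AddCircle (1:ℝ)) ∉ (fun z => z - (((k : ℝ) * α : ℝ) : AddCircle (1:ℝ))) '' arc x y) ∨
    (∃ k : ℕ, k < cfQ α n ∧
        (0 : AddCircle (1:ℝ)) ∈ (fun z => z + (((k : ℝ) * α : ℝ) : AddCircle (1:ℝ))) '' arc x y) :=
  stmt5_general α hα x y n hd
end
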